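/- Let G = SO(3), the compact group of 3×3 real matrices B with BᵀB = I and det B = 1, and let H be the closed subgroup of matrices of block form diag(A, 1) with A ∈ SO(2) (rotations about the third coordinate axis). Then the double coset convolution on probability Radon measures on G//H is commutative: μ₁ ∗ μ₂ = μ₂ ∗ μ₁ for all probability Radon measures μ₁, μ₂ on G//H; equivalently δ_{HxH} ∗ δ_{HyH} = δ_{HyH} ∗ δ_{HxH} for all x, y ∈ SO(3). In other words, (SO(3), SO(2)) is a Gelfand pair. -/

import Mathlib

open MeasureTheory Topology
open scoped ENNReal

noncomputable section

section DoubleCosets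

variable {G : Type*} [Group G] [TopologicalSpace G]

/-- The double coset equivalence relation on `G` determined by a subgroup `H`:
`x ∼ y` iff `y ∈ HxH`. -/
def dcSetoid (H : Subgroup G) : Setoid G where
  r x y := ∃ h₁ ∈ H, ∃ h₂ ∈ H, y = h₁ * x * h₂
  iseqv := by
    constructor
    · intro x
      exact ⟨1, H.one_mem, 1, H.one_mem, by simp⟩
    · rintro x y ⟨h₁, hh₁, h₂, hh₂, rfl⟩
      exact ⟨h₁⁻¹, H.inv_mem hh₁, h₂⁻¹, H.inv_mem hh₂, by group⟩
    · rintro x y z ⟨h₁, hh₁, h₂, hh₂, rfl⟩ ⟨k₁, hk₁, k₂, hk₂, rfl⟩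
      exact ⟨k₁ * h₁, H.mul_mem hk₁ hh₁, h₂ * k₂, H.mul_mem hh₂ hk₂, by group⟩

/-- The space `G//H` of double cosets `HxH`, with the quotient topology. -/
def DCos (H : Subgroup G) : Type _ := Quotient (dcSetoid H)

/-- The projection `P : G → G//H`, `x ↦ HxH`. -/
def Pmap (H : Subgroup G) : G → DCos H := Quotient.mk (dcSetoid H)

instance (H : Subgroup G) : TopologicalSpace (DCos H) :=
  inferInstanceAs (TopologicalSpace (Quotient (dcSetoid H)))

noncomputable instance (H : Subgroup G) : MeasurableSpace (DCos H) := borel (DCos H)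

instance (H : Subgroup G) : BorelSpace (DCos H) := ⟨rfl⟩

lemma continuous_Pmap (H : Subgroup G) : Continuous (Pmap H) :=
  continuous_quot_mk

instance [CompactSpace G] (H : Subgroup G) : CompactSpace (DCos H) := by
  constructor
  rw [← (Set.range_eq_univ.mpr (fun q => Quot.exists_rep q) : Set.range (Pmap H) = Set.univ)]
  exact isCompact_range (continuous_Pmap H)

lemma measurable_Pmap [MeasurableSpace G] [BorelSpace G] (H : Subgroup G) :
    Measurable (Pmap H) :=
  (continuous_Pmap H).measurable

variable [MeasurableSpace G]

/-- The convolution of two (finite positive Radon) measures on the group `G`: the pushforward of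
the product measure under multiplication. -/
noncomputable def mconv (μ ν : Measure G) : Measure G :=
  (μ.prod ν).map fun p : G × G => p.1 * p.2

/-- `QG μ_H f x = ∫_{H×H} f(h₁ x h₂) dμ_H(h₁) dμ_H(h₂)`, the function on `G` inducing
`Q(f) : G//H → ℂ`. -/
noncomputable def QG (μH : Measure G) (f : G → ℂ) (x : G) : ℂ :=
  ∫ h₁, ∫ h₂, f (h₁ * x * h₂) ∂μH ∂μH

/-- `IsQtilde μ_H μ ν` says that `ν = Q̃(μ)`, i.e. `ν` is the measure on `G` determined by
`∫_G f dν = ∫_{G//H} Q(f) dμ` for all `f ∈ C(G)`, where `Q(f)` is the continuous function on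
`G//H` with `Q(f) ∘ P = QG μ_H f`. -/
def IsQtilde {H : Subgroup G} (μH : Measure G) (μ : Measure (DCos H)) (ν : Measure G) : Prop :=
  ∀ (f : C(G, ℂ)) (F : DCos H → ℂ), Continuous F → (∀ x : G, F (Pmap H x) = QG μH f x) →
    ∫ g, f g ∂ν = ∫ q, F q ∂μ

end DoubleCosets

section SO3

open Matrix

/-- The 3×3 real matrices. -/
abbrev Mat3 := Matrix (Fin 3) (Fin 3) ℝ

/-- `SO(3) = {B ∈ M₃(ℝ) : BᵀB = I, det B = 1}`, as a subgroup of the units of the matrix ring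
(so its coerced type is a compact topological group with the topology inherited from the
3×3 real matrices). -/
def SO3 : Subgroup (Matrix.GeneralLinearGroup (Fin 3) ℝ) where
  carrier := {A | (A : Mat3)ᵀ * (A : Mat3) = 1 ∧ (A : Mat3).det = 1}
  one_mem' := by
    constructor <;> simp
  mul_mem' := by
    rintro a b ⟨ha1, ha2⟩ ⟨hb1, hb2⟩
    constructor
    · rw [Units.val_mul, Matrix.transpose_mul, mul_assoc, ← mul_assoc ((a : Mat3)ᵀ), ha1,
        one_mul, hb1]
    · rw [Units.val_mul, Matrix.det_mul, ha2, hb2, mul_one]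
  inv_mem' := by
    rintro a ⟨ha1, ha2⟩
    have hval : ((a⁻¹ : (Matrix.GeneralLinearGroup (Fin 3) ℝ)) : Mat3) = (a : Mat3)ᵀ := by
      calc ((a⁻¹ : (Matrix.GeneralLinearGroup (Fin 3) ℝ)) : Mat3)
          = 1 * ((a⁻¹ : (Matrix.GeneralLinearGroup (Fin 3) ℝ)) : Mat3) := (one_mul _).symm
        _ = ((a : Mat3)ᵀ * (a : Mat3)) * ((a⁻¹ : (Matrix.GeneralLinearGroup (Fin 3) ℝ)) : Mat3) := by
            rw [ha1]
        _ = (a : Mat3)ᵀ * ((a : Mat3) * ((a⁻¹ : (Matrix.GeneralLinearGroup (Fin 3) ℝ)) : Mat3)) := by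
            rw [mul_assoc]
        _ = (a : Mat3)ᵀ := by rw [← Units.val_mul, mul_inv_cancel, Units.val_one, mul_one]
    constructor
    · rw [hval, Matrix.transpose_transpose]
      exact mul_eq_one_comm.mp ha1
    · rw [hval, Matrix.det_transpose]
      exact ha2

noncomputable instance : MeasurableSpace (↥SO3) := borel (↥SO3)

instance : BorelSpace (↥SO3) := ⟨rfl⟩

/-- The matrix of an element of `SO(3)`. -/
def so3Mat (g : ↥SO3) : Mat3 := ((g : Matrix.GeneralLinearGroup (Fin 3) ℝ) : Mat3)

/-- `SO(2)` embedded in `SO(3)` as the closed subgroup of matrices of block form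
`diag(A, 1)` with `A ∈ SO(2)` (rotations about the third coordinate axis). -/
def SO2in : Subgroup (↥SO3) where
  carrier := {g | ∃ A : Matrix (Fin 2) (Fin 2) ℝ, Aᵀ * A = 1 ∧ A.det = 1 ∧
    so3Mat g = Matrix.reindex finSumFinEquiv finSumFinEquiv
      (Matrix.fromBlocks A 0 0 (1 : Matrix (Fin 1) (Fin 1) ℝ))}
  one_mem' := by
    refine ⟨1, by simp, by simp, ?_⟩
    simp [so3Mat, Matrix.fromBlocks_one, Matrix.reindex_apply, Matrix.submatrix_one_equiv]
  mul_mem' := by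
    rintro a b ⟨A, hA1, hA2, hA3⟩ ⟨B, hB1, hB2, hB3⟩
    refine ⟨A * B, ?_, ?_, ?_⟩
    · rw [Matrix.transpose_mul, mul_assoc, ← mul_assoc Aᵀ, hA1, one_mul, hB1]
    · rw [Matrix.det_mul, hA2, hB2, mul_one]
    · have hcoe : so3Mat (a * b) = so3Mat a * so3Mat b := rfl
      rw [hcoe, hA3, hB3]
      simp only [Matrix.reindex_apply, Matrix.submatrix_mul_equiv,
        Matrix.fromBlocks_multiply]
      simp
  inv_mem' := by
    rintro a ⟨A, hA1, hA2, hA3⟩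
    refine ⟨Aᵀ, ?_, ?_, ?_⟩
    · rw [Matrix.transpose_transpose]
      exact mul_eq_one_comm.mp hA1
    · rw [Matrix.det_transpose]
      exact hA2
    · have hmul : so3Mat a * so3Mat a⁻¹ = so3Mat (a * a⁻¹) := rfl
      have hone : so3Mat a * so3Mat a⁻¹ = 1 := by
        rw [hmul, mul_inv_cancel]
        simp [so3Mat]
      have horth : (so3Mat a)ᵀ * so3Mat a = 1 := a.2.1
      have h1 : so3Mat a⁻¹ = (so3Mat a)ᵀ := by
        calc so3Mat a⁻¹ = 1 * so3Mat a⁻¹ := (one_mul _).symm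
          _ = ((so3Mat a)ᵀ * so3Mat a) * so3Mat a⁻¹ := by rw [horth]
          _ = (so3Mat a)ᵀ * (so3Mat a * so3Mat a⁻¹) := by rw [mul_assoc]
          _ = (so3Mat a)ᵀ := by rw [hone, mul_one]
      rw [h1, hA3]
      simp [Matrix.reindex_apply, Matrix.transpose_submatrix, Matrix.fromBlocks_transpose]

end SO3

/-!
Gelfand's trick. Every double coset `HgH` of `H = SO(2)` in `SO(3)` is stable under inversion:
by the Cartan decomposition `g = h a u` with `h, u ∈ H` and `a` a rotation about the second axis,
and `a⁻¹ = w a w` for `w = diag(-1, -1, 1) ∈ H`. Hence `P ∘ inv = P`. The bi-`H`-invariant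
probability `μ_H` carried by `H` is inversion invariant, so `Q(f ∘ inv) = Q(f) ∘ inv = Q(f)`, and
therefore every `ν = Q̃(μ)` is inversion invariant. Since inversion reverses convolutions,
`P̃(ν₁ ∗ ν₂) = P̃((ν₁ ∗ ν₂)⁻¹) = P̃(ν₂⁻¹ ∗ ν₁⁻¹) = P̃(ν₂ ∗ ν₁)`.
-/

section DoubleCosetConvolution

variable {G : Type*} [Group G]

theorem Pmap_mul_mul {H : Subgroup G} {h₁ h₂ : G} (hh₁ : h₁ ∈ H) (hh₂ : h₂ ∈ H) (x : G) :
    Pmap H (h₁ * x * h₂) = Pmap H x :=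
  (Quotient.sound (⟨h₁, hh₁, h₂, hh₂, rfl⟩ : (dcSetoid H).r x (h₁ * x * h₂))).symm

variable [MeasurableSpace G]

theorem inv_mconv [MeasurableMul₂ G] [MeasurableInv G] (μ ν : Measure G) [SFinite μ]
    [SFinite ν] : (mconv μ ν).inv = mconv ν.inv μ.inv := by
  have hmul : Measurable fun p : G × G => p.1 * p.2 := measurable_mul
  unfold mconv Measure.inv
  rw [Measure.map_map measurable_inv hmul, Measure.map_prod_map _ _ measurable_inv measurable_inv,
    Measure.map_map hmul (measurable_inv.prodMap measurable_inv),
    ← Measure.prod_swap (μ := μ) (ν := ν), Measure.map_map (hmul.comp (measurable_inv.prodMap measurable_inv)) measurable_swap]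
  congr 1
  ext p
  simp

theorem integral_mul_left_eq_self_of_map_eq [MeasurableMul G] {E : Type*}
    [NormedAddCommGroup E] [NormedSpace ℝ E] {μ : Measure G} {h : G}
    (hμ : μ.map (h * ·) = μ) (f : G → E) : ∫ x, f (h * x) ∂μ = ∫ x, f x ∂μ :=
  MeasurePreserving.integral_comp' (f := MeasurableEquiv.mulLeft h) ⟨measurable_const_mul h, hμ⟩ f

theorem integral_mul_right_eq_self_of_map_eq [MeasurableMul G] {E : Type*}
    [NormedAddCommGroup E] [NormedSpace ℝ E] {μ : Measure G} {h : G}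
    (hμ : μ.map (· * h) = μ) (f : G → E) : ∫ x, f (x * h) ∂μ = ∫ x, f x ∂μ :=
  MeasurePreserving.integral_comp' (f := MeasurableEquiv.mulRight h) ⟨measurable_mul_const h, hμ⟩ f

/-- Both sides equal `(μ.prod ν)` pushed forward by multiplication: it absorbs `ν` on the left
and `μ` on the right. -/
theorem eq_of_map_mul_right_eq_of_map_mul_left_eq [MeasurableMul₂ G] {H : Subgroup G}
    {μ ν : Measure G} [IsProbabilityMeasure μ] [IsProbabilityMeasure ν]
    (hμ : μ (H : Set G)ᶜ = 0) (hν : ν (H : Set G)ᶜ = 0)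
    (hμH : ∀ h ∈ H, μ.map (· * h) = μ) (hνH : ∀ h ∈ H, ν.map (h * ·) = ν) : μ = ν := by
  ext s hs
  have hmul : MeasurableSet ((fun p : G × G => p.1 * p.2) ⁻¹' s) := measurable_mul hs
  have hleft : (μ.prod ν) ((fun p : G × G => p.1 * p.2) ⁻¹' s) = ν s := by
    rw [Measure.prod_apply hmul]
    have hae : ∀ᵐ x ∂μ, ν (Prod.mk x ⁻¹' ((fun p : G × G => p.1 * p.2) ⁻¹' s)) = ν s :=
      (ae_iff.mpr hμ).mono fun x hx => by
        change ν ((x * ·) ⁻¹' s) = ν s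
        rw [← Measure.map_apply (measurable_const_mul x) hs, hνH x hx]
    rw [lintegral_congr_ae hae, lintegral_const, measure_univ, mul_one]
  have hright : (μ.prod ν) ((fun p : G × G => p.1 * p.2) ⁻¹' s) = μ s := by
    rw [Measure.prod_apply_symm hmul]
    have hae : ∀ᵐ y ∂ν, μ ((fun x => (x, y)) ⁻¹' ((fun p : G × G => p.1 * p.2) ⁻¹' s)) = μ s :=
      (ae_iff.mpr hν).mono fun y hy => by
        change μ ((· * y) ⁻¹' s) = μ s
        rw [← Measure.map_apply (measurable_mul_const y) hs, hμH y hy]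
    rw [lintegral_congr_ae hae, lintegral_const, measure_univ, mul_one]
  rw [← hleft, hright]

theorem isInvInvariant_of_map_mul_eq [MeasurableMul₂ G] [MeasurableInv G] {H : Subgroup G}
    {μ : Measure G} [IsProbabilityMeasure μ] (hμ : μ (H : Set G)ᶜ = 0)
    (hμH : ∀ h ∈ H, μ.map (h * ·) = μ ∧ μ.map (· * h) = μ) : μ.IsInvInvariant := by
  have : IsProbabilityMeasure μ.inv := Measure.isProbabilityMeasure_map measurable_inv.aemeasurable
  refine ⟨(eq_of_map_mul_right_eq_of_map_mul_left_eq hμ ?_ (fun h hh => (hμH h hh).2) ?_).symm⟩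
  · rw [Measure.inv_apply, Set.compl_inv, inv_coe_set, hμ]
  · intro h hh
    have hcomp : (h * ·) ∘ (Inv.inv : G → G) = Inv.inv ∘ (· * h⁻¹) := by
      ext x; simp
    rw [Measure.inv, Measure.map_map (measurable_const_mul h) measurable_inv, hcomp,
      ← Measure.map_map measurable_inv (measurable_mul_const h⁻¹), (hμH h⁻¹ (H.inv_mem hh)).2]

end DoubleCosetConvolution

theorem continuous_integral_of_compactSpace {X Y E : Type*} [TopologicalSpace X]
    [FirstCountableTopology X] [LocallyCompactSpace X] [TopologicalSpace Y] [CompactSpace Y]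
    [MeasurableSpace Y] [OpensMeasurableSpace Y] [NormedAddCommGroup E] [NormedSpace ℝ E]
    [SecondCountableTopologyEither Y E] (μ : Measure Y) [IsFiniteMeasure μ] {F : X → Y → E}
    (hF : Continuous F.uncurry) : Continuous fun x => ∫ y, F x y ∂μ := by
  simpa only [Measure.restrict_univ] using
    continuous_parametric_integral_of_continuous (μ := μ) hF isCompact_univ

section QG

variable {G : Type*} [Group G] [MeasurableSpace G]

theorem QG_mul_mul [MeasurableMul G] {H : Subgroup G} {μH : Measure G}
    (hμH : ∀ h ∈ H, μH.map (h * ·) = μH ∧ μH.map (· * h) = μH) (f : G → ℂ)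
    {h₁ h₂ : G} (hh₁ : h₁ ∈ H) (hh₂ : h₂ ∈ H) (x : G) :
    QG μH f (h₁ * x * h₂) = QG μH f x := by
  unfold QG
  calc ∫ u, ∫ v, f (u * (h₁ * x * h₂) * v) ∂μH ∂μH
      = ∫ u, ∫ v, f (u * h₁ * x * (h₂ * v)) ∂μH ∂μH := by simp only [mul_assoc]
    _ = ∫ u, ∫ v, f (u * h₁ * x * v) ∂μH ∂μH := by
        congr 1 with u
        exact integral_mul_left_eq_self_of_map_eq (hμH h₂ hh₂).1 fun v => f (u * h₁ * x * v)
    _ = ∫ u, ∫ v, f (u * x * v) ∂μH ∂μH :=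
        integral_mul_right_eq_self_of_map_eq (hμH h₁ hh₁).2 fun u => ∫ v, f (u * x * v) ∂μH

variable [TopologicalSpace G] [IsTopologicalGroup G] [CompactSpace G] [BorelSpace G]
  [SecondCountableTopology G] (μH : Measure G) [IsFiniteMeasure μH]

theorem continuous_QG {f : G → ℂ} (hf : Continuous f) : Continuous (QG μH f) := by
  have hinner : Continuous fun p : G × G => ∫ v, f (p.2 * p.1 * v) ∂μH :=
    continuous_integral_of_compactSpace μH (F := fun (p : G × G) v => f (p.2 * p.1 * v))
      (by fun_prop)
  exact continuous_integral_of_compactSpace μH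
    (F := fun x u => ∫ v, f (u * x * v) ∂μH) hinner

theorem QG_comp_inv [μH.IsInvInvariant] {f : G → ℂ} (hf : Continuous f) (x : G) :
    QG μH (fun g => f g⁻¹) x = QG μH f x⁻¹ := by
  have hint : Integrable (fun p : G × G => f (p.2 * x⁻¹ * p.1)) (μH.prod μH) :=
    (by fun_prop : Continuous fun p : G × G => f (p.2 * x⁻¹ * p.1)).integrable_of_hasCompactSupport
      (HasCompactSupport.of_compactSpace _)
  unfold QG
  calc ∫ u, ∫ v, f (u * x * v)⁻¹ ∂μH ∂μH
      = ∫ u, ∫ v, f (v⁻¹ * x⁻¹ * u⁻¹) ∂μH ∂μH := by simp only [mul_inv_rev, mul_assoc]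
    _ = ∫ u, ∫ v, f (v * x⁻¹ * u⁻¹) ∂μH ∂μH := by
        congr 1 with u
        exact integral_inv_eq_self (fun v => f (v * x⁻¹ * u⁻¹)) μH
    _ = ∫ u, ∫ v, f (v * x⁻¹ * u) ∂μH ∂μH :=
        integral_inv_eq_self (fun u => ∫ v, f (v * x⁻¹ * u) ∂μH) μH
    _ = ∫ v, ∫ u, f (v * x⁻¹ * u) ∂μH ∂μH := integral_integral_swap hint

end QG

section IsQtilde

variable {G : Type*} [Group G] [TopologicalSpace G] [IsTopologicalGroup G] [CompactSpace G]
  [MeasurableSpace G] [BorelSpace G] [SecondCountableTopology G] {H : Subgroup G}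
  {μH : Measure G} [IsFiniteMeasure μH] {μ : Measure (DCos H)} {ν : Measure G}

theorem IsQtilde.integral_eq_of_QG_eq
    (hμH : ∀ h ∈ H, μH.map (h * ·) = μH ∧ μH.map (· * h) = μH) (hq : IsQtilde μH μ ν)
    {f f' : C(G, ℂ)} (hff' : QG μH f = QG μH f') : ∫ g, f g ∂ν = ∫ g, f' g ∂ν := by
  have hresp : ∀ x y, (dcSetoid H).r x y → QG μH f x = QG μH f y := by
    rintro x _ ⟨h₁, hh₁, h₂, hh₂, rfl⟩
    exact (QG_mul_mul hμH f hh₁ hh₂ x).symm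
  have hF : Continuous (Quotient.lift (QG μH f) hresp) :=
    (continuous_QG μH f.continuous).quotient_lift hresp
  rw [hq f _ hF fun _ => rfl, hq f' _ hF fun x => congrFun hff' x]

theorem IsQtilde.isInvInvariant [TopologicalSpace.PseudoMetrizableSpace G] [IsFiniteMeasure ν]
    [μH.IsInvInvariant] (hsymm : ∀ g : G, Pmap H g⁻¹ = Pmap H g)
    (hμH : ∀ h ∈ H, μH.map (h * ·) = μH ∧ μH.map (· * h) = μH) (hq : IsQtilde μH μ ν) :
    ν.IsInvInvariant := by
  refine ⟨ext_of_forall_integral_eq_of_IsFiniteMeasure fun φ => ?_⟩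
  let f : C(G, ℂ) := ⟨fun g => (φ g : ℂ), by fun_prop⟩
  let finv : C(G, ℂ) := ⟨fun g => f g⁻¹, by fun_prop⟩
  have hQG : QG μH finv = QG μH f := by
    ext x
    obtain ⟨h₁, hh₁, h₂, hh₂, hx⟩ := Quotient.exact (hsymm x)
    calc QG μH finv x = QG μH f x⁻¹ := QG_comp_inv μH f.continuous x
      _ = QG μH f (h₁ * x⁻¹ * h₂) := (QG_mul_mul hμH f hh₁ hh₂ x⁻¹).symm
      _ = QG μH f x := by rw [← hx]
  rw [← Complex.ofReal_inj, ← integral_complex_ofReal, ← integral_complex_ofReal, Measure.inv,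
    integral_map measurable_inv.aemeasurable (by fun_prop)]
  exact hq.integral_eq_of_QG_eq hμH hQG

end IsQtilde

theorem map_Pmap_mconv_comm_of_forall_Pmap_inv {G : Type*} [Group G] [TopologicalSpace G]
    [IsTopologicalGroup G] [CompactSpace G] [TopologicalSpace.PseudoMetrizableSpace G]
    [SecondCountableTopology G] [MeasurableSpace G] [BorelSpace G] {H : Subgroup G}
    (hsymm : ∀ g : G, Pmap H g⁻¹ = Pmap H g) {μH : Measure G} [IsProbabilityMeasure μH]
    (hμHconc : μH (H : Set G)ᶜ = 0)
    (hμH : ∀ h ∈ H, μH.map (h * ·) = μH ∧ μH.map (· * h) = μH)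
    {μ₁ μ₂ : Measure (DCos H)} {ν₁ ν₂ : Measure G} [IsFiniteMeasure ν₁] [IsFiniteMeasure ν₂]
    (h₁ : IsQtilde μH μ₁ ν₁) (h₂ : IsQtilde μH μ₂ ν₂) :
    (mconv ν₁ ν₂).map (Pmap H) = (mconv ν₂ ν₁).map (Pmap H) := by
  have := isInvInvariant_of_map_mul_eq hμHconc hμH
  have := h₁.isInvInvariant hsymm hμH
  have := h₂.isInvInvariant hsymm hμH
  have hP : Pmap H ∘ Inv.inv = Pmap H := funext hsymm
  calc (mconv ν₁ ν₂).map (Pmap H) = (mconv ν₁ ν₂).inv.map (Pmap H) := by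
        rw [Measure.inv, Measure.map_map (measurable_Pmap H) measurable_inv, hP]
    _ = (mconv ν₂ ν₁).map (Pmap H) := by
        rw [inv_mconv, Measure.inv_eq_self, Measure.inv_eq_self]

namespace SO3

open Matrix Set Topology

instance : SecondCountableTopology Mat3 :=
  inferInstanceAs (SecondCountableTopology (Fin 3 → Fin 3 → ℝ))

instance : TopologicalSpace.PseudoMetrizableSpace Mat3 :=
  inferInstanceAs (TopologicalSpace.PseudoMetrizableSpace (Fin 3 → Fin 3 → ℝ))

theorem so3Mat_mul (g₁ g₂ : ↥SO3) : so3Mat (g₁ * g₂) = so3Mat g₁ * so3Mat g₂ := rfl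

theorem transpose_so3Mat_mul_self (g : ↥SO3) : (so3Mat g)ᵀ * so3Mat g = 1 := g.2.1

theorem so3Mat_inv (g : ↥SO3) : so3Mat g⁻¹ = (so3Mat g)ᵀ :=
  Units.inv_eq_of_mul_eq_one_right (mul_eq_one_comm.mp (transpose_so3Mat_mul_self g))

theorem continuous_so3Mat : Continuous so3Mat :=
  Units.continuous_val.comp continuous_subtype_val

theorem so3Mat_injective : Function.Injective so3Mat :=
  fun _ _ h => Subtype.ext (Units.ext h)

theorem range_so3Mat : range so3Mat = {A : Mat3 | Aᵀ * A = 1 ∧ A.det = 1} := by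
  refine Subset.antisymm ?_ fun A hA => ?_
  · rintro _ ⟨g, rfl⟩
    exact g.2
  · exact ⟨⟨⟨A, Aᵀ, mul_eq_one_comm.mp hA.1, hA.1⟩, hA⟩, rfl⟩

theorem isCompact_range_so3Mat : IsCompact (range so3Mat) := by
  have hbdd : range so3Mat ⊆ univ.pi fun _ => univ.pi fun _ => Icc (-1 : ℝ) 1 := by
    rintro _ ⟨g, rfl⟩ i - j -
    have hU : so3Mat g ∈ unitaryGroup (Fin 3) ℝ := by
      rw [mem_unitaryGroup_iff', star_eq_conjTranspose, conjTranspose_eq_transpose_of_trivial]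
      exact transpose_so3Mat_mul_self g
    exact abs_le.mp (entry_norm_bound_of_unitary hU i j)
  have hclosed : IsClosed (range so3Mat) := by
    rw [range_so3Mat]
    exact (isClosed_eq (by fun_prop) continuous_const).inter
      (isClosed_eq (by fun_prop) continuous_const)
  exact (isCompact_univ_pi fun _ => isCompact_univ_pi fun _ => isCompact_Icc).of_isClosed_subset
    hclosed hbdd

/-- On `SO(3)` the inverse is the transpose, so the topology of the units is already induced by
the matrix entries. -/
theorem isEmbedding_so3Mat : IsEmbedding so3Mat := by
  refine ⟨IsInducing.of_comp (g := fun A : Mat3 => (A, MulOpposite.op Aᵀ)) continuous_so3Mat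
    (by fun_prop) ?_, so3Mat_injective⟩
  have he := Units.isEmbedding_embedProduct.comp (IsEmbedding.subtypeVal (p := (· ∈ SO3)))
  convert he.isInducing using 1
  ext g
  · rfl
  · exact congrArg MulOpposite.op (so3Mat_inv g).symm

instance : CompactSpace ↥SO3 :=
  ⟨isEmbedding_so3Mat.isCompact_iff.mpr (image_univ ▸ isCompact_range_so3Mat)⟩

instance : SecondCountableTopology ↥SO3 := isEmbedding_so3Mat.secondCountableTopology

instance : TopologicalSpace.PseudoMetrizableSpace ↥SO3 :=
  isEmbedding_so3Mat.pseudoMetrizableSpace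

def blockDiagOne (A : Matrix (Fin 2) (Fin 2) ℝ) : Mat3 :=
  reindex finSumFinEquiv finSumFinEquiv (fromBlocks A 0 0 (1 : Matrix (Fin 1) (Fin 1) ℝ))

theorem blockDiagOne_eq (A : Matrix (Fin 2) (Fin 2) ℝ) :
    blockDiagOne A = !![A 0 0, A 0 1, 0; A 1 0, A 1 1, 0; 0, 0, 1] := by
  ext i j
  fin_cases i <;> fin_cases j <;> rfl

theorem transpose_blockDiagOne_mul (A B : Matrix (Fin 2) (Fin 2) ℝ) :
    (blockDiagOne A)ᵀ * blockDiagOne B = blockDiagOne (Aᵀ * B) := by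
  simp [blockDiagOne, transpose_submatrix, fromBlocks_transpose, fromBlocks_multiply]

theorem det_blockDiagOne (A : Matrix (Fin 2) (Fin 2) ℝ) : (blockDiagOne A).det = A.det := by
  simp [blockDiagOne]

theorem blockDiagOne_injective : Function.Injective blockDiagOne := by
  intro A B h
  rw [blockDiagOne_eq, blockDiagOne_eq] at h
  ext i j
  fin_cases i <;> fin_cases j
  exacts [congrFun (congrFun h 0) 0, congrFun (congrFun h 0) 1, congrFun (congrFun h 1) 0,
    congrFun (congrFun h 1) 1]

theorem blockDiagOne_one : blockDiagOne 1 = 1 := by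
  simp [blockDiagOne, fromBlocks_one]

theorem exists_mem_SO2in_so3Mat_eq {A : Matrix (Fin 2) (Fin 2) ℝ} (hA : Aᵀ * A = 1)
    (hdet : A.det = 1) : ∃ h ∈ SO2in, so3Mat h = blockDiagOne A := by
  have hmem : blockDiagOne A ∈ range so3Mat := by
    rw [range_so3Mat]
    exact ⟨by rw [transpose_blockDiagOne_mul, hA, blockDiagOne_one], by rw [det_blockDiagOne, hdet]⟩
  obtain ⟨h, hh⟩ := hmem
  exact ⟨h, ⟨A, hA, hdet, hh⟩, hh⟩

theorem mulVec_e₃ (M : Mat3) : M *ᵥ ![0, 0, 1] = ![M 0 2, M 1 2, M 2 2] := by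
  ext i
  fin_cases i <;> simp [mulVec, dotProduct, Fin.sum_univ_three]

theorem mem_SO2in_of_mulVec_e₃ {g : ↥SO3} (hg : so3Mat g *ᵥ ![0, 0, 1] = ![0, 0, 1]) :
    g ∈ SO2in := by
  set M := so3Mat g
  rw [mulVec_e₃] at hg
  have h02 : M 0 2 = 0 := by simpa using congrFun hg 0
  have h12 : M 1 2 = 0 := by simpa using congrFun hg 1
  have h22 : M 2 2 = 1 := by simpa using congrFun hg 2
  have horth : Mᵀ * M = 1 := transpose_so3Mat_mul_self g
  have h20 : M 2 0 = 0 := by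
    simpa [mul_apply, Fin.sum_univ_three, h02, h12, h22] using congrFun (congrFun horth 0) 2
  have h21 : M 2 1 = 0 := by
    simpa [mul_apply, Fin.sum_univ_three, h02, h12, h22] using congrFun (congrFun horth 1) 2
  set A : Matrix (Fin 2) (Fin 2) ℝ := !![M 0 0, M 0 1; M 1 0, M 1 1]
  have hM : M = blockDiagOne A := by
    rw [blockDiagOne_eq]
    ext i j
    fin_cases i <;> fin_cases j <;> simp [A, h02, h12, h22, h20, h21]
  refine ⟨A, blockDiagOne_injective ?_, ?_, hM⟩
  · rw [← transpose_blockDiagOne_mul, ← hM, horth, blockDiagOne_one]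
  · rw [← det_blockDiagOne, ← hM]
    exact g.2.2

theorem exists_sq_add_sq_eq_one_and_mul_eq_mul (x y : ℝ) :
    ∃ p q : ℝ, p ^ 2 + q ^ 2 = 1 ∧ p * y = q * x := by
  set z : ℂ := ⟨x, y⟩
  refine ⟨Real.cos z.arg, Real.sin z.arg, Real.cos_sq_add_sin_sq _, ?_⟩
  have hx : ‖z‖ * Real.cos z.arg = x := Complex.norm_mul_cos_arg z
  have hy : ‖z‖ * Real.sin z.arg = y := Complex.norm_mul_sin_arg z
  rw [← hx, ← hy]
  ring

def rotY (r c : ℝ) : Mat3 := !![c, 0, r; 0, 1, 0; -r, 0, c]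

theorem rotY_mem_range_so3Mat {r c : ℝ} (h : r ^ 2 + c ^ 2 = 1) : rotY r c ∈ range so3Mat := by
  rw [range_so3Mat]
  refine ⟨?_, ?_⟩
  · ext i j
    fin_cases i <;> fin_cases j <;> simp [rotY, mul_apply, Fin.sum_univ_three] <;> linarith
  · simp [rotY, det_fin_three]
    linarith

theorem transpose_rotY_mulVec {r c : ℝ} (h : r ^ 2 + c ^ 2 = 1) :
    (rotY r c)ᵀ *ᵥ ![r, 0, c] = ![0, 0, 1] := by
  ext i
  fin_cases i <;> simp [rotY, mulVec, dotProduct, Fin.sum_univ_three] <;> linarith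

theorem transpose_rotY (r c : ℝ) :
    (rotY r c)ᵀ = blockDiagOne (-1) * rotY r c * blockDiagOne (-1) := by
  rw [blockDiagOne_eq]
  ext i j
  fin_cases i <;> fin_cases j <;> simp [rotY, mul_apply, Fin.sum_univ_three]

/-- Cartan decomposition `SO(3) = H · {rotations about the second axis} · H`: `h⁻¹` turns the
third column of `g` into the `(e₁, e₃)`-plane, where a rotation about the second axis takes
it back to `e₃`. -/
theorem exists_eq_mul_rotY_mul (g : ↥SO3) :
    ∃ h ∈ SO2in, ∃ u ∈ SO2in, ∃ r c : ℝ, ∃ a : ↥SO3, so3Mat a = rotY r c ∧ g = h * a * u := by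
  set M := so3Mat g
  have hcol : M 0 2 ^ 2 + M 1 2 ^ 2 + M 2 2 ^ 2 = 1 := by
    simpa [mul_apply, Fin.sum_univ_three, sq] using
      congrFun (congrFun (transpose_so3Mat_mul_self g) 2) 2
  obtain ⟨p, q, hpq, hperp⟩ := exists_sq_add_sq_eq_one_and_mul_eq_mul (M 0 2) (M 1 2)
  obtain ⟨k, hk, hkM⟩ := exists_mem_SO2in_so3Mat_eq (A := !![p, q; -q, p])
    (by ext i j; fin_cases i <;> fin_cases j <;> simp [mul_apply] <;> linarith)
    (by simp [det_fin_two]; linarith)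
  set r := p * M 0 2 + q * M 1 2
  have hrc : r ^ 2 + M 2 2 ^ 2 = 1 := by
    linear_combination (M 0 2 ^ 2 + M 1 2 ^ 2) * hpq + hcol - (p * M 1 2 - q * M 0 2) * hperp
  have hk₃ : so3Mat k *ᵥ ![M 0 2, M 1 2, M 2 2] = ![r, 0, M 2 2] := by
    rw [hkM, blockDiagOne_eq]
    ext i
    fin_cases i <;> simp [mulVec, dotProduct, Fin.sum_univ_three, r]
    linarith
  obtain ⟨a, ha⟩ := rotY_mem_range_so3Mat hrc
  refine ⟨k⁻¹, inv_mem hk, a⁻¹ * k * g, mem_SO2in_of_mulVec_e₃ ?_, r, M 2 2, a, ha, by group⟩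
  rw [so3Mat_mul, so3Mat_mul, so3Mat_inv, ha, ← mulVec_mulVec, ← mulVec_mulVec, mulVec_e₃, hk₃,
    transpose_rotY_mulVec hrc]

theorem Pmap_SO2in_inv (g : ↥SO3) : Pmap SO2in g⁻¹ = Pmap SO2in g := by
  obtain ⟨h, hh, u, hu, r, c, a, ha, rfl⟩ := exists_eq_mul_rotY_mul g
  obtain ⟨w, hw, hwM⟩ := exists_mem_SO2in_so3Mat_eq (A := -1) (by simp) (by simp [det_fin_two])
  have ha_inv : a⁻¹ = w * a * w :=
    so3Mat_injective (by rw [so3Mat_inv, so3Mat_mul, so3Mat_mul, ha, hwM, transpose_rotY])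
  calc Pmap SO2in (h * a * u)⁻¹ = Pmap SO2in (u⁻¹ * (w * a * w) * h⁻¹) := by
        rw [← ha_inv]; group
    _ = Pmap SO2in a := by rw [Pmap_mul_mul (inv_mem hu) (inv_mem hh), Pmap_mul_mul hw hw]
    _ = Pmap SO2in (h * a * u) := (Pmap_mul_mul hh hu a).symm

end SO3

theorem so3_so2_gelfand_pair_general
    (μH : Measure (↥SO3)) [IsProbabilityMeasure μH]
    (hμHconc : μH ((SO2in : Set ↥SO3))ᶜ = 0)
    (hμHinv : ∀ h ∈ SO2in,
      μH.map (fun g => h * g) = μH ∧ μH.map (fun g => g * h) = μH)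
    (μ₁ μ₂ : Measure (DCos SO2in))
    (ν₁ ν₂ : Measure (↥SO3)) [IsProbabilityMeasure ν₁] [IsProbabilityMeasure ν₂]
    (h₁ : IsQtilde μH μ₁ ν₁) (h₂ : IsQtilde μH μ₂ ν₂) :
    (mconv ν₁ ν₂).map (Pmap SO2in) = (mconv ν₂ ν₁).map (Pmap SO2in) :=
  map_Pmap_mconv_comm_of_forall_Pmap_inv SO3.Pmap_SO2in_inv hμHconc hμHinv h₁ h₂

/-- Let `G = SO(3)` and let `H` be the closed subgroup of matrices of block
form `diag(A, 1)` with `A ∈ SO(2)`.  Then the double coset convolution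
`μ₁ ∗ μ₂ := P̃(Q̃(μ₁) ∗ Q̃(μ₂))` on probability Radon measures on `G//H` is commutative; in other
words, `(SO(3), SO(2))` is a Gelfand pair. -/
theorem so3_so2_gelfand_pair
    (μH : Measure (↥SO3)) [IsProbabilityMeasure μH]
    (hμHconc : μH ((SO2in : Set ↥SO3))ᶜ = 0)
    (hμHinv : ∀ h ∈ SO2in,
      μH.map (fun g => h * g) = μH ∧ μH.map (fun g => g * h) = μH)
    (μ₁ μ₂ : Measure (DCos SO2in)) [IsProbabilityMeasure μ₁] [IsProbabilityMeasure μ₂]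
    (ν₁ ν₂ : Measure (↥SO3)) [IsProbabilityMeasure ν₁] [IsProbabilityMeasure ν₂]
    (h₁ : IsQtilde μH μ₁ ν₁) (h₂ : IsQtilde μH μ₂ ν₂) :
    (mconv ν₁ ν₂).map (Pmap SO2in) = (mconv ν₂ ν₁).map (Pmap SO2in) :=
  so3_so2_gelfand_pair_general μH hμHconc hμHinv μ₁ μ₂ ν₁ ν₂ h₁ h₂
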